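/- arXiv:2308.15913 — 4 statements merged into one kernel-verified Lean document; each statement's English description precedes it below -/
import Mathlib

section
/- Let n ≥ 2 and let A be a non-singular n×n complex matrix. Let λ denote the smallest eigenvalue of the positive definite Hermitian matrix A*A (so λ > 0). Then λ > (n−1)^{n−1}·|det A|²·‖A‖^{−2(n−1)}, where ‖A‖ is the Frobenius norm of A. -/
/-- The Frobenius norm of a complex matrix. -/
noncomputable def frobNorm {n : ℕ} (A : Matrix (Fin n) (Fin n) ℂ) : ℝ :=
  Real.sqrt (∑ i, ∑ j, ‖A i j‖ ^ 2)

/-- The smallest eigenvalue of the Hermitian matrix `Aᴴ * A`. -/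
noncomputable def minEigAhA {n : ℕ} (A : Matrix (Fin n) (Fin n) ℂ) : ℝ :=
  ⨅ i, (Matrix.isHermitian_conjTranspose_mul_self A).eigenvalues i

open Matrix in
/-- **Lower bound for the smallest eigenvalue of `Aᴴ * A` for a non-singular matrix.** -/
theorem smallest_eigenvalue_lower_bound (n : ℕ) (hn : 2 ≤ n)
    (A : Matrix (Fin n) (Fin n) ℂ) (hA : A.det ≠ 0) :
    ((n : ℝ) - 1) ^ (n - 1) * ‖A.det‖ ^ 2
        * frobNorm A ^ (-(2 * ((n : ℤ) - 1))) < minEigAhA A := by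
  classical
  have hH := Matrix.isHermitian_conjTranspose_mul_self A
  set μ : Fin n → ℝ := hH.eigenvalues with hμdef
  set D : ℝ := ‖A.det‖ ^ 2 with hDdef
  -- determinant of AᴴA
  have hdetC : (Aᴴ * A).det = (D : ℂ) := by
    rw [Matrix.det_mul, Matrix.det_conjTranspose, hDdef, Complex.sq_norm]
    exact (Complex.normSq_eq_conj_mul_self (z := A.det)).symm
  have hprod : ∏ i, μ i = D := by
    have h := hH.det_eq_prod_eigenvalues
    rw [hdetC] at h
    have h2 : ((∏ i, μ i : ℝ) : ℂ) = ((D : ℝ) : ℂ) := by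
      rw [Complex.ofReal_prod]; exact h.symm
    exact_mod_cast h2
  -- positivity of eigenvalues
  have hDne : D ≠ 0 := pow_ne_zero 2 ((norm_ne_zero_iff).2 hA)
  have hpos : ∀ i, 0 < μ i := by
    intro i
    rcases (Matrix.eigenvalues_conjTranspose_mul_self_nonneg A i).lt_or_eq with h | h
    · exact h
    · exfalso
      apply hDne
      rw [← hprod]
      exact Finset.prod_eq_zero (Finset.mem_univ i) h.symm
  -- trace of AᴴA
  set T : ℝ := ∑ i, ∑ j, ‖A i j‖ ^ 2 with hTdef
  have hfrob : frobNorm A ^ 2 = T := by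
    rw [frobNorm, Real.sq_sqrt]
    exact Finset.sum_nonneg fun i _ =>
      Finset.sum_nonneg fun j _ => sq_nonneg _
  have htrace1 : (Aᴴ * A).trace = ∑ i, (μ i : ℂ) := by
    nth_rewrite 1 [hH.spectral_theorem]
    rw [Unitary.conjStarAlgAut_apply]
    rw [Matrix.trace_mul_cycle]
    rw [show (star (hH.eigenvectorUnitary : Matrix (Fin n) (Fin n) ℂ)) *
        (hH.eigenvectorUnitary : Matrix (Fin n) (Fin n) ℂ) = 1 from
      (Matrix.mem_unitaryGroup_iff').mp hH.eigenvectorUnitary.2]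
    rw [one_mul, Matrix.trace_diagonal]
    rfl
  have htrace2 : (Aᴴ * A).trace = (T : ℂ) := by
    rw [Matrix.trace]
    simp only [Matrix.diag_apply, Matrix.mul_apply, Matrix.conjTranspose_apply]
    rw [hTdef, Finset.sum_comm]
    push_cast
    refine Finset.sum_congr rfl fun j _ => Finset.sum_congr rfl fun i _ => ?_
    rw [← Complex.ofReal_pow, Complex.sq_norm, Complex.normSq_eq_conj_mul_self]
    rfl
  have hsum : ∑ i, μ i = T := by
    have : ((∑ i, μ i : ℝ) : ℂ) = (T : ℂ) := by push_cast; rw [← htrace1]; exact htrace2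
    exact_mod_cast this
  haveI : Nonempty (Fin n) := ⟨⟨0, by omega⟩⟩
  have hTpos : 0 < T := by
    rw [← hsum]
    exact Finset.sum_pos (fun i _ => hpos i) Finset.univ_nonempty
  -- minimizer
  obtain ⟨i0, hi0⟩ := exists_eq_ciInf_of_finite (f := μ)
  have hmin : minEigAhA A = μ i0 := hi0.symm
  -- AM-GM over the remaining eigenvalues
  set m : ℕ := n - 1 with hmdef
  have hm1 : 1 ≤ m := by omega
  have hmR : (m : ℝ) ≠ 0 := by positivity
  set s : Finset (Fin n) := Finset.univ.erase i0 with hsdef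
  have hcard : s.card = m := by
    rw [hsdef, Finset.card_erase_of_mem (Finset.mem_univ i0), Finset.card_univ,
      Fintype.card_fin]
  set S : ℝ := ∑ i ∈ s, μ i with hSdef
  set P : ℝ := ∏ i ∈ s, μ i with hPdef
  have hPnn : 0 ≤ P := Finset.prod_nonneg fun i _ => (hpos i).le
  have hgm : P ^ ((m : ℝ)⁻¹) ≤ S / m := by
    have h := Real.geom_mean_le_arith_mean_weighted s (fun _ => (m : ℝ)⁻¹) μ
      (fun i _ => by positivity)
      (by rw [Finset.sum_const, hcard, nsmul_eq_mul, mul_inv_cancel₀ hmR])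
      (fun i _ => (hpos i).le)
    rwa [Real.finset_prod_rpow s μ (fun i _ => (hpos i).le), ← Finset.mul_sum,
      inv_mul_eq_div] at h
  have hPle : P ≤ (S / m) ^ m := by
    have h1 : (P ^ ((m : ℝ)⁻¹)) ^ m ≤ (S / m) ^ m :=
      pow_le_pow_left₀ (Real.rpow_nonneg hPnn _) hgm m
    rwa [← Real.rpow_natCast (P ^ ((m : ℝ)⁻¹)) m, ← Real.rpow_mul hPnn,
      inv_mul_cancel₀ hmR, Real.rpow_one] at h1
  have hS : S = T - μ i0 := by
    rw [hSdef, hsdef, Finset.sum_erase_eq_sub (Finset.mem_univ i0), hsum]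
  have hSlt : S < T := by rw [hS]; linarith [hpos i0]
  have hSnn : 0 ≤ S := Finset.sum_nonneg fun i _ => (hpos i).le
  have hpowlt : (S / m) ^ m < (T / m) ^ m := by
    apply pow_lt_pow_left₀ _ (by positivity) (by omega)
    exact div_lt_div_of_pos_right hSlt (by positivity)
  have hD : D = μ i0 * P := by
    rw [← hprod, hPdef, hsdef, Finset.mul_prod_erase Finset.univ μ (Finset.mem_univ i0)]
  have hDlt : D < μ i0 * (T / m) ^ m := by
    rw [hD]
    exact mul_lt_mul_of_pos_left (lt_of_le_of_lt hPle hpowlt) (hpos i0)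
  -- rewrite the goal
  have hfrobpos : 0 < frobNorm A := by
    rw [frobNorm]; exact Real.sqrt_pos.2 hTpos
  have hzpow : frobNorm A ^ (-(2 * ((n : ℤ) - 1))) = ((T ^ m)⁻¹ : ℝ) := by
    have he : -(2 * ((n : ℤ) - 1)) = -((2 * m : ℕ) : ℤ) := by
      rw [hmdef]; push_cast; omega
    rw [he, _root_.zpow_neg, zpow_natCast, pow_mul, hfrob]
  have hcast : ((n : ℝ) - 1) = (m : ℝ) := by
    rw [hmdef]; push_cast [Nat.cast_sub (by omega : 1 ≤ n)]; ring
  rw [hmin, hzpow, hcast]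
  rw [← div_eq_mul_inv, div_lt_iff₀ (pow_pos hTpos m)]
  calc (m : ℝ) ^ m * D < (m : ℝ) ^ m * (μ i0 * (T / m) ^ m) :=
        mul_lt_mul_of_pos_left hDlt (pow_pos (by exact_mod_cast Nat.lt_of_lt_of_le Nat.zero_lt_one hm1) m)
    _ = μ i0 * T ^ m := by
        rw [div_pow]; field_simp
end

section
/- Let D be a domain in ℂⁿ, let f : D → ℂⁿ be holomorphic, and let a ∈ D with det f′(a) ≠ 0. Let λ > 0 denote the smallest eigenvalue of the positive definite Hermitian matrix (f′(a))*·f′(a). Suppose ρ₀ > 0 is such that the closed ball {z : |z − a| ≤ ρ₀} is contained in D and Σ_{i,k=1}^{n} |∂fᵢ/∂z_k(z) − ∂fᵢ/∂z_k(a)|² ≤ λ for all z with |z − a| ≤ ρ₀ (equivalently, ‖f′(z) − f′(a)‖² ≤ λ in the Frobenius norm). Then f is univalent (injective) on the open ball Bⁿ(a, ρ₀) = {z : |z − a| < ρ₀}, and f(Bⁿ(a, ρ₀)) contains the open ball centered at f(a) of radius 2^{−1}·λ^{1/2}·ρ₀. -/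
open Metric
open scoped InnerProductSpace

/-- The complex Jacobian matrix of `f` at `z`. -/
noncomputable def jacobian {n : ℕ} (f : EuclideanSpace ℂ (Fin n) → EuclideanSpace ℂ (Fin n))
    (z : EuclideanSpace ℂ (Fin n)) : Matrix (Fin n) (Fin n) ℂ :=
  fun i j => fderiv ℂ f z (EuclideanSpace.single j 1) i

/-- The largest eigenvalue of the Hermitian matrix `Aᴴ * A`. -/
noncomputable def maxEigAhA {n : ℕ} (A : Matrix (Fin n) (Fin n) ℂ) : ℝ :=
  ⨆ i, (Matrix.isHermitian_conjTranspose_mul_self A).eigenvalues i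

namespace TakahashiAux

variable {n : ℕ}

lemma decomp (v : EuclideanSpace ℂ (Fin n)) :
    v = ∑ j, v j • (EuclideanSpace.single j 1 : EuclideanSpace ℂ (Fin n)) := by
  simpa [EuclideanSpace.basisFun_apply, EuclideanSpace.basisFun_repr]
    using ((EuclideanSpace.basisFun (Fin n) ℂ).sum_repr v).symm

lemma clm_apply_eq (L : EuclideanSpace ℂ (Fin n) →L[ℂ] EuclideanSpace ℂ (Fin n))
    (v : EuclideanSpace ℂ (Fin n)) (i : Fin n) :
    L v i = ∑ j, L (EuclideanSpace.single j 1) i * v j := by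
  conv_lhs => rw [decomp v, map_sum]
  have h := map_sum (EuclideanSpace.proj (𝕜 := ℂ) i)
    (fun j => L (v j • EuclideanSpace.single j 1)) Finset.univ
  refine h.trans (Finset.sum_congr rfl fun j _ => ?_)
  rw [map_smul]
  simp [mul_comm]

lemma clm_eq_toEuclideanLin (L : EuclideanSpace ℂ (Fin n) →L[ℂ] EuclideanSpace ℂ (Fin n))
    (M : Matrix (Fin n) (Fin n) ℂ) (hM : ∀ i j, M i j = L (EuclideanSpace.single j 1) i)
    (v : EuclideanSpace ℂ (Fin n)) :
    L v = Matrix.toEuclideanLin M v := by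
  ext i
  rw [clm_apply_eq]
  simp [Matrix.toEuclideanLin_apply, Matrix.mulVec, dotProduct, hM]

lemma frobNorm_nonneg' (M : Matrix (Fin n) (Fin n) ℂ) : 0 ≤ frobNorm M := Real.sqrt_nonneg _

lemma sq_frobNorm (M : Matrix (Fin n) (Fin n) ℂ) :
    frobNorm M ^ 2 = ∑ i, ∑ j, ‖M i j‖ ^ 2 := by
  rw [frobNorm, Real.sq_sqrt]
  positivity

lemma row_cs (M : Matrix (Fin n) (Fin n) ℂ) (v : EuclideanSpace ℂ (Fin n)) (i : Fin n) :
    ‖∑ j, M i j * v j‖ ≤ Real.sqrt (∑ j, ‖M i j‖ ^ 2) * ‖v‖ := by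
  set w : EuclideanSpace ℂ (Fin n) := WithLp.toLp 2 (fun j => (starRingEnd ℂ) (M i j)) with hw
  have key := norm_inner_le_norm (𝕜 := ℂ) (x := w) (y := v)
  have h1 : ⟪w, v⟫_ℂ = ∑ j, M i j * v j := by
    simp [PiLp.inner_apply, RCLike.inner_apply, hw, mul_comm]
  have h2 : ‖w‖ = Real.sqrt (∑ j, ‖M i j‖ ^ 2) := by
    rw [EuclideanSpace.norm_eq]
    congr 1
    refine Finset.sum_congr rfl fun j _ => ?_
    simp [hw]
  rw [h1, h2] at key
  exact key

lemma norm_apply_le_frob (L : EuclideanSpace ℂ (Fin n) →L[ℂ] EuclideanSpace ℂ (Fin n))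
    (M : Matrix (Fin n) (Fin n) ℂ) (hM : ∀ i j, M i j = L (EuclideanSpace.single j 1) i)
    (v : EuclideanSpace ℂ (Fin n)) :
    ‖L v‖ ≤ frobNorm M * ‖v‖ := by
  have hsum : ∑ i, ‖L v i‖ ^ 2 ≤ frobNorm M ^ 2 * ‖v‖ ^ 2 := by
    rw [sq_frobNorm, Finset.sum_mul]
    refine Finset.sum_le_sum fun i _ => ?_
    have h1 : ‖L v i‖ ≤ Real.sqrt (∑ j, ‖M i j‖ ^ 2) * ‖v‖ := by
      rw [clm_apply_eq]
      have := row_cs M v i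
      refine le_trans (le_of_eq ?_) this
      congr 1
      exact Finset.sum_congr rfl fun j _ => by rw [hM]
    calc ‖L v i‖ ^ 2 ≤ (Real.sqrt (∑ j, ‖M i j‖ ^ 2) * ‖v‖) ^ 2 := by
          have := norm_nonneg (L v i); nlinarith
      _ = (∑ j, ‖M i j‖ ^ 2) * ‖v‖ ^ 2 := by
          rw [mul_pow, Real.sq_sqrt (by positivity)]
  have h2 : ‖L v‖ = Real.sqrt (∑ i, ‖L v i‖ ^ 2) := by
    rw [EuclideanSpace.norm_eq]
  rw [h2]
  calc Real.sqrt (∑ i, ‖L v i‖ ^ 2) ≤ Real.sqrt (frobNorm M ^ 2 * ‖v‖ ^ 2) :=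
        Real.sqrt_le_sqrt hsum
    _ = frobNorm M * ‖v‖ := by
        rw [Real.sqrt_mul (by positivity), Real.sqrt_sq (frobNorm_nonneg' M),
          Real.sqrt_sq (norm_nonneg v)]

lemma inner_AhA (M : Matrix (Fin n) (Fin n) ℂ) (v : EuclideanSpace ℂ (Fin n)) :
    ⟪Matrix.toEuclideanLin M v, Matrix.toEuclideanLin M v⟫_ℂ
      = ⟪v, Matrix.toEuclideanLin (M.conjTranspose * M) v⟫_ℂ := by
  rw [EuclideanSpace.inner_eq_star_dotProduct, EuclideanSpace.inner_eq_star_dotProduct]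
  simp only [Matrix.ofLp_toEuclideanLin_apply]
  rw [Matrix.star_mulVec, dotProduct_comm (M.mulVec _), ← Matrix.dotProduct_mulVec, Matrix.mulVec_mulVec]
  exact dotProduct_comm _ _

lemma eig_lower (M : Matrix (Fin n) (Fin n) ℂ) (v : EuclideanSpace ℂ (Fin n)) :
    minEigAhA M * ‖v‖ ^ 2 ≤ ‖Matrix.toEuclideanLin M v‖ ^ 2 := by
  set hH := Matrix.isHermitian_conjTranspose_mul_self M with hHdef
  set B := hH.eigenvectorBasis with hB
  set μ := hH.eigenvalues with hμ
  set S := Matrix.toEuclideanLin (M.conjTranspose * M) with hS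
  have hSB : ∀ i, S (B i) = (μ i : ℂ) • B i := by
    intro i
    have h := hH.mulVec_eigenvectorBasis i
    apply WithLp.ofLp_injective 2
    rw [hS, Matrix.ofLp_toEuclideanLin_apply, h]
    ext j
    simp [Complex.real_smul]
    rfl
  have hSv : S v = ∑ i, ⟪B i, v⟫_ℂ • ((μ i : ℂ) • B i) := by
    conv_lhs => rw [← B.sum_repr' v]
    rw [map_sum]
    exact Finset.sum_congr rfl fun i _ => by rw [map_smul, hSB]
  have hexp : ⟪v, S v⟫_ℂ = ((∑ i, μ i * ‖⟪B i, v⟫_ℂ‖ ^ 2 : ℝ) : ℂ) := by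
    rw [hSv, inner_sum]
    push_cast
    refine Finset.sum_congr rfl fun i _ => ?_
    rw [inner_smul_right, inner_smul_right, ← inner_conj_symm v (B i)]
    set d := ⟪B i, v⟫_ℂ with hd
    rw [show d * ((μ i : ℂ) * (starRingEnd ℂ) d) = (μ i : ℂ) * (d * (starRingEnd ℂ) d) by ring,
      Complex.mul_conj, Complex.normSq_eq_norm_sq]
    push_cast
    ring
  have hTv : (‖Matrix.toEuclideanLin M v‖ ^ 2 : ℝ) = ∑ i, μ i * ‖⟪B i, v⟫_ℂ‖ ^ 2 := by
    have h1 : ((‖Matrix.toEuclideanLin M v‖ ^ 2 : ℝ) : ℂ) = ⟪v, S v⟫_ℂ := by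
      rw [hS, ← inner_AhA, inner_self_eq_norm_sq_to_K]
      norm_cast
    have := h1.trans hexp
    exact_mod_cast this
  have hpars : ∑ i, ‖⟪B i, v⟫_ℂ‖ ^ 2 = ‖v‖ ^ 2 := by
    rw [← B.repr.norm_map v, EuclideanSpace.norm_eq, Real.sq_sqrt (by positivity)]
    exact Finset.sum_congr rfl fun i _ => by rw [B.repr_apply_apply]
  rw [hTv, ← hpars, Finset.mul_sum]
  refine Finset.sum_le_sum fun i _ => ?_
  refine mul_le_mul_of_nonneg_right ?_ (by positivity)
  exact ciInf_le (Set.Finite.bddBelow (Set.finite_range μ)) i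

lemma minEig_pos (hn : 0 < n) (M : Matrix (Fin n) (Fin n) ℂ) (hdet : M.det ≠ 0) :
    0 < minEigAhA M := by
  have : Nonempty (Fin n) := ⟨⟨0, hn⟩⟩
  set hH := Matrix.isHermitian_conjTranspose_mul_self M with hHdef
  set μ := hH.eigenvalues with hμ
  have hdet2 : (M.conjTranspose * M).det ≠ 0 := by
    rw [Matrix.det_mul, Matrix.det_conjTranspose]
    exact mul_ne_zero (star_ne_zero.mpr hdet) hdet
  have hpos : ∀ i, 0 < μ i := by
    intro i
    refine lt_of_le_of_ne (Matrix.eigenvalues_conjTranspose_mul_self_nonneg M i) ?_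
    intro h0
    apply hdet2
    rw [hH.det_eq_prod_eigenvalues]
    refine Finset.prod_eq_zero (Finset.mem_univ i) ?_
    show (μ i : ℂ) = 0
    rw [← h0]
    norm_num
  obtain ⟨i₀, hi₀⟩ := Finite.exists_min μ
  exact lt_of_lt_of_le (hpos i₀) (le_ciInf hi₀)

end TakahashiAux

set_option maxHeartbeats 1000000 in
/-- **Takahashi's theorem**: quantitative univalence and covering for holomorphic mappings. -/
theorem takahashi_univalence_and_covering (n : ℕ)
    (D : Set (EuclideanSpace ℂ (Fin n))) (hD : IsOpen D) (hDconn : IsConnected D)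
    (f : EuclideanSpace ℂ (Fin n) → EuclideanSpace ℂ (Fin n))
    (hf : DifferentiableOn ℂ f D)
    (a : EuclideanSpace ℂ (Fin n)) (ha : a ∈ D)
    (hdet : (jacobian f a).det ≠ 0)
    (ρ₀ : ℝ) (hρ₀ : 0 < ρ₀) (hball : closedBall a ρ₀ ⊆ D)
    (hsmall : ∀ z ∈ closedBall a ρ₀,
      frobNorm (jacobian f z - jacobian f a) ^ 2 ≤ minEigAhA (jacobian f a)) :
    Set.InjOn f (ball a ρ₀) ∧
      ball (f a) (2⁻¹ * Real.sqrt (minEigAhA (jacobian f a)) * ρ₀) ⊆ f '' ball a ρ₀ := by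
  classical
  rcases Nat.eq_zero_or_pos n with hn0 | hn
  · subst hn0
    haveI : Subsingleton (EuclideanSpace ℂ (Fin 0)) :=
      ⟨fun x y => PiLp.ext fun i => i.elim0⟩
    exact ⟨fun x _ y _ _ => Subsingleton.elim x y,
      fun w _ => ⟨a, mem_ball_self hρ₀, Subsingleton.elim _ _⟩⟩
  have hnE : Nonempty (Fin n) := ⟨⟨0, hn⟩⟩
  set lam := minEigAhA (jacobian f a) with hlamdef
  have hlam : 0 < lam := TakahashiAux.minEig_pos hn _ hdet
  set sq := Real.sqrt lam with hsqdef
  have hsq : 0 < sq := Real.sqrt_pos.mpr hlam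
  have hDat : ∀ z ∈ D, DifferentiableAt ℂ f z := fun z hz => hf.differentiableAt (hD.mem_nhds hz)
  set A' : EuclideanSpace ℂ (Fin n) →L[ℂ] EuclideanSpace ℂ (Fin n) := fderiv ℂ f a with hA'def
  -- pointwise operator-norm bound from the Frobenius hypothesis
  have hop : ∀ z ∈ closedBall a ρ₀, ∀ v, ‖(fderiv ℂ f z - A') v‖ ≤ sq * ‖v‖ := by
    intro z hz v
    have hM : ∀ i j, (jacobian f z - jacobian f a) i j
        = (fderiv ℂ f z - A') (EuclideanSpace.single j 1) i := by
      intro i j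
      simp [jacobian, hA'def, Matrix.sub_apply, ContinuousLinearMap.sub_apply]
    have h1 := TakahashiAux.norm_apply_le_frob _ _ hM v
    have h2 : frobNorm (jacobian f z - jacobian f a) ≤ sq := by
      rw [hsqdef, ← Real.sqrt_sq (TakahashiAux.frobNorm_nonneg' _)]
      exact Real.sqrt_le_sqrt (hsmall z hz)
    exact h1.trans (mul_le_mul_of_nonneg_right h2 (norm_nonneg v))
  -- lower bound for A'
  have hlow : ∀ v, sq * ‖v‖ ≤ ‖A' v‖ := by
    intro v
    have h1 := TakahashiAux.eig_lower (jacobian f a) v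
    have h2 : A' v = Matrix.toEuclideanLin (jacobian f a) v :=
      TakahashiAux.clm_eq_toEuclideanLin A' (jacobian f a) (fun i j => rfl) v
    rw [← h2] at h1
    have h3 := Real.sqrt_le_sqrt h1
    rwa [Real.sqrt_mul hlam.le, Real.sqrt_sq (norm_nonneg v), Real.sqrt_sq (norm_nonneg _)]
      at h3
  -- the auxiliary map g = f - A'
  set g : EuclideanSpace ℂ (Fin n) → EuclideanSpace ℂ (Fin n) := fun z => f z - A' z with hgdef
  have hgat : ∀ z ∈ D, DifferentiableAt ℂ g z := fun z hz =>
    (hDat z hz).sub (A'.differentiable.differentiableAt)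
  have hgderiv : ∀ z ∈ D, fderiv ℂ g z = fderiv ℂ f z - A' := by
    intro z hz
    rw [hgdef]
    rw [fderiv_fun_sub (hDat z hz) (A'.differentiable.differentiableAt), A'.fderiv]
  have hgOn : DifferentiableOn ℂ g (ball a ρ₀) := fun z hz =>
    (hgat z (hball (ball_subset_closedBall hz))).differentiableWithinAt
  have hgnorm : ∀ z ∈ closedBall a ρ₀, ‖fderiv ℂ g z‖ ≤ sq := by
    intro z hz
    rw [hgderiv z (hball hz)]
    exact ContinuousLinearMap.opNorm_le_bound _ hsq.le (hop z hz)
  have hgLip : ∀ x ∈ closedBall a ρ₀, ∀ y ∈ closedBall a ρ₀, ‖g x - g y‖ ≤ sq * ‖x - y‖ := by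
    intro x hx y hy
    exact (convex_closedBall a ρ₀).norm_image_sub_le_of_norm_fderiv_le
      (fun z hz => hgat z (hball hz)) (fun z hz => hgnorm z hz) hy hx
  -- lines through a
  have hline_maps : ∀ (u : EuclideanSpace ℂ (Fin n)) (r : ℝ), 0 < r → ‖u‖ ≤ r →
      Set.MapsTo (fun w : ℂ => a + w • u) (ball (0:ℂ) (ρ₀ / r)) (ball a ρ₀) := by
    intro u r hr hu w hw
    rw [mem_ball, dist_zero_right] at hw
    rw [mem_ball, dist_eq_norm, add_sub_cancel_left, norm_smul]
    calc ‖w‖ * ‖u‖ ≤ ‖w‖ * r := by gcongr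
      _ < ρ₀ := (lt_div_iff₀ hr).mp hw
  have hlined : ∀ u : EuclideanSpace ℂ (Fin n), Differentiable ℂ (fun w : ℂ => a + w • u) :=
    fun u => (differentiable_id.smul_const u).const_add a
  have dline : ∀ (u : EuclideanSpace ℂ (Fin n)) (w₀ : ℂ),
      HasDerivAt (fun w : ℂ => a + w • u) u w₀ := by
    intro u w₀
    simpa using ((hasDerivAt_id w₀).smul_const u).const_add a
  have hg0 : HasFDerivAt g (0 : EuclideanSpace ℂ (Fin n) →L[ℂ] EuclideanSpace ℂ (Fin n)) a := by
    have h1 := (hgat a ha).hasFDerivAt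
    rwa [hgderiv a ha, hA'def, sub_self] at h1
  -- improved Lipschitz estimate on smaller balls (Schwarz)
  have hM1 : ∀ ρ, 0 < ρ → ρ < ρ₀ → ∀ x ∈ closedBall a ρ, ∀ y ∈ closedBall a ρ,
      ‖g x - g y‖ ≤ sq * ρ / ρ₀ * ‖x - y‖ := by
    intro ρ hρ hρlt x hx y hy
    set R₁ := ρ₀ / ρ with hR₁def
    have hR₁ : 1 < R₁ := (one_lt_div hρ).mpr hρlt
    have hR₁pos : 0 < R₁ := lt_trans one_pos hR₁
    have hxa : ‖x - a‖ ≤ ρ := by rwa [mem_closedBall, dist_eq_norm] at hx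
    have hya : ‖y - a‖ ≤ ρ := by rwa [mem_closedBall, dist_eq_norm] at hy
    set θ : ℂ → EuclideanSpace ℂ (Fin n) :=
      fun w => g (a + w • (x - a)) - g (a + w • (y - a)) with hθdef
    have hmapsx := hline_maps (x - a) ρ hρ hxa
    have hmapsy := hline_maps (y - a) ρ hρ hya
    have hθd : DifferentiableOn ℂ θ (ball 0 R₁) :=
      (hgOn.comp ((hlined (x - a)).differentiableOn) hmapsx).sub
        (hgOn.comp ((hlined (y - a)).differentiableOn) hmapsy)
    have hθ0 : θ 0 = 0 := by simp [hθdef]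
    have hθderiv0 : deriv θ 0 = 0 := by
      have d1 : HasDerivAt (fun w : ℂ => g (a + w • (x - a)))
          ((0 : EuclideanSpace ℂ (Fin n) →L[ℂ] EuclideanSpace ℂ (Fin n)) (x - a)) 0 := by
        have := HasFDerivAt.comp_hasDerivAt (0:ℂ)
          (show HasFDerivAt g
            (0 : EuclideanSpace ℂ (Fin n) →L[ℂ] EuclideanSpace ℂ (Fin n))
            (a + (0:ℂ) • (x - a)) by simpa using hg0) (dline (x - a) 0)
        exact this
      have d2 : HasDerivAt (fun w : ℂ => g (a + w • (y - a)))
          ((0 : EuclideanSpace ℂ (Fin n) →L[ℂ] EuclideanSpace ℂ (Fin n)) (y - a)) 0 := by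
        have := HasFDerivAt.comp_hasDerivAt (0:ℂ)
          (show HasFDerivAt g
            (0 : EuclideanSpace ℂ (Fin n) →L[ℂ] EuclideanSpace ℂ (Fin n))
            (a + (0:ℂ) • (y - a)) by simpa using hg0) (dline (y - a) 0)
        exact this
      have := (d1.sub d2).deriv
      simp at this
      exact this
    set dθ := dslope θ 0 with hdθdef
    have hdθd : DifferentiableOn ℂ dθ (ball 0 R₁) :=
      (Complex.differentiableOn_dslope (ball_mem_nhds 0 hR₁pos)).mpr hθd
    have hdθ0 : dθ 0 = 0 := by rw [hdθdef, dslope_same]; exact hθderiv0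
    have hdθbound : ∀ w ∈ ball (0:ℂ) R₁, ‖dθ w‖ ≤ sq * ‖x - y‖ := by
      intro w hw
      rcases eq_or_ne w 0 with rfl | hw0
      · rw [hdθ0, norm_zero]; positivity
      · have hwpos : (0:ℝ) < ‖w‖ := norm_pos_iff.mpr hw0
        rw [hdθdef, dslope_of_ne _ hw0, slope_def_module, hθ0, sub_zero, sub_zero,
          norm_smul, norm_inv]
        have hθw : ‖θ w‖ ≤ sq * (‖w‖ * ‖x - y‖) := by
          have h1 := hgLip (a + w • (x - a)) (ball_subset_closedBall (hmapsx hw))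
            (a + w • (y - a)) (ball_subset_closedBall (hmapsy hw))
          have h2 : (a + w • (x - a)) - (a + w • (y - a)) = w • (x - y) := by
            rw [add_sub_add_left_eq_sub, ← smul_sub, sub_sub_sub_cancel_right]
          calc ‖θ w‖ ≤ sq * ‖(a + w • (x - a)) - (a + w • (y - a))‖ := h1
            _ = sq * (‖w‖ * ‖x - y‖) := by rw [h2, norm_smul]
        calc ‖w‖⁻¹ * ‖θ w‖ ≤ ‖w‖⁻¹ * (sq * (‖w‖ * ‖x - y‖)) := by gcongr
          _ = (‖w‖⁻¹ * ‖w‖) * (sq * ‖x - y‖) := by ring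
          _ = sq * ‖x - y‖ := by rw [inv_mul_cancel₀ (ne_of_gt hwpos), one_mul]
    have hd1 : dθ 1 = g x - g y := by
      rw [hdθdef, dslope_of_ne _ one_ne_zero, slope_def_module, hθ0, sub_zero, sub_zero]
      simp [hθdef]
    have h1mem : (1:ℂ) ∈ ball (0:ℂ) R₁ := by
      rw [mem_ball, dist_zero_right, norm_one]
      exact hR₁
    have hkey : ∀ ε, 0 < ε → ‖g x - g y‖ ≤ (sq * ‖x - y‖ + ε) / R₁ := by
      intro ε hε
      have hmaps : Set.MapsTo dθ (ball 0 R₁) (ball (dθ 0) (sq * ‖x - y‖ + ε)) := by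
        intro w hw
        rw [hdθ0, mem_ball, dist_zero_right]
        exact lt_of_le_of_lt (hdθbound w hw) (lt_add_of_pos_right _ hε)
      have hS := Complex.dist_le_div_mul_dist_of_mapsTo_ball hdθd (hmaps.mono_right ball_subset_closedBall) h1mem
      rw [hdθ0, hd1, dist_zero_right, dist_zero_right, norm_one, mul_one] at hS
      exact hS
    have hfin : ‖g x - g y‖ ≤ sq * ‖x - y‖ / R₁ := by
      refine le_of_forall_pos_le_add fun ε hε => ?_
      calc ‖g x - g y‖ ≤ (sq * ‖x - y‖ + ε * R₁) / R₁ := hkey _ (by positivity)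
        _ = sq * ‖x - y‖ / R₁ + ε := by field_simp
    calc ‖g x - g y‖ ≤ sq * ‖x - y‖ / R₁ := hfin
      _ = sq * ρ / ρ₀ * ‖x - y‖ := by rw [hR₁def]; field_simp
  -- injectivity
  have hinj : Set.InjOn f (ball a ρ₀) := by
    intro x hx y hy hfxy
    by_contra hne
    have hxy : (0:ℝ) < ‖x - y‖ := by
      rw [norm_pos_iff, sub_ne_zero]; exact hne
    set ρ := max ‖x - a‖ ‖y - a‖ with hρdef
    have hρpos : 0 < ρ := by
      by_contra hc
      push_neg at hc
      have h1 : ‖x - a‖ = 0 := le_antisymm ((le_max_left _ _).trans hc) (norm_nonneg _)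
      have h2 : ‖y - a‖ = 0 := le_antisymm ((le_max_right _ _).trans hc) (norm_nonneg _)
      rw [norm_eq_zero, sub_eq_zero] at h1 h2
      exact hne (h1.trans h2.symm)
    have hρlt : ρ < ρ₀ := max_lt (by rwa [mem_ball, dist_eq_norm] at hx)
      (by rwa [mem_ball, dist_eq_norm] at hy)
    have h1 := hM1 ρ hρpos hρlt x
      (by rw [mem_closedBall, dist_eq_norm]; exact le_max_left _ _) y
      (by rw [mem_closedBall, dist_eq_norm]; exact le_max_right _ _)
    have h2 : g x - g y = -(A' (x - y)) := by
      rw [hgdef]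
      simp only
      rw [hfxy, map_sub]
      abel
    rw [h2, norm_neg] at h1
    have h3 := hlow (x - y)
    have h4 : sq * ρ / ρ₀ * ‖x - y‖ < sq * ‖x - y‖ := by
      have h5 : sq * ρ / ρ₀ < sq := by
        rw [div_lt_iff₀ hρ₀]
        nlinarith
      exact mul_lt_mul_of_pos_right h5 hxy
    linarith
  refine ⟨hinj, ?_⟩
  -- second-order estimate
  have hM2 : ∀ z ∈ ball a ρ₀, ‖g z - g a‖ ≤ sq * ‖z - a‖ ^ 2 / (2 * ρ₀) := by
    intro z hz
    rcases eq_or_ne z a with rfl | hza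
    · simp only [sub_self, norm_zero]
      positivity
    set u := z - a with hudef
    have hu : 0 < ‖u‖ := by rw [norm_pos_iff, hudef, sub_ne_zero]; exact hza
    have huρ : ‖u‖ < ρ₀ := by rw [hudef]; rwa [mem_ball, dist_eq_norm] at hz
    set R₁ := ρ₀ / ‖u‖ with hR₁def
    have hR₁ : 1 < R₁ := (one_lt_div hu).mpr huρ
    have hR₁pos : 0 < R₁ := lt_trans one_pos hR₁
    have hmaps := hline_maps u ‖u‖ hu le_rfl
    set φ : ℂ → EuclideanSpace ℂ (Fin n) := fun w => g (a + w • u) with hφdef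
    have hφd : DifferentiableOn ℂ φ (ball 0 R₁) :=
      hgOn.comp ((hlined u).differentiableOn) hmaps
    have hφdAt : ∀ w ∈ ball (0:ℂ) R₁, HasDerivAt φ ((fderiv ℂ g (a + w • u)) u) w := by
      intro w hw
      have h1 : HasFDerivAt g (fderiv ℂ g (a + w • u)) (a + w • u) :=
        (hgat _ (hball (ball_subset_closedBall (hmaps hw)))).hasFDerivAt
      exact HasFDerivAt.comp_hasDerivAt w h1 (dline u w)
    set χ := deriv φ with hχdef
    have hχeq : ∀ w ∈ ball (0:ℂ) R₁, χ w = (fderiv ℂ g (a + w • u)) u :=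
      fun w hw => (hφdAt w hw).deriv
    have hχd : DifferentiableOn ℂ χ (ball 0 R₁) :=
      ((hφd.analyticOnNhd isOpen_ball).deriv).differentiableOn
    have hχ0 : χ 0 = 0 := by
      rw [hχeq 0 (mem_ball_self hR₁pos)]
      have h1 : a + (0:ℂ) • u = a := by simp
      rw [h1, hgderiv a ha, hA'def, sub_self]
      simp
    have hχbound : ∀ w ∈ ball (0:ℂ) R₁, ‖χ w‖ ≤ sq * ‖u‖ := by
      intro w hw
      rw [hχeq w hw, hgderiv _ (hball (ball_subset_closedBall (hmaps hw)))]
      exact hop _ (ball_subset_closedBall (hmaps hw)) u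
    have hχS : ∀ w ∈ ball (0:ℂ) R₁, ‖χ w‖ ≤ sq * ‖u‖ / R₁ * ‖w‖ := by
      intro w hw
      rcases eq_or_ne w 0 with rfl | hw0
      · simp [hχ0]
      have hwpos : (0:ℝ) < ‖w‖ := norm_pos_iff.mpr hw0
      refine le_of_forall_pos_le_add fun ε hε => ?_
      have hε' : 0 < ε * R₁ / ‖w‖ := by positivity
      have hmapsχ : Set.MapsTo χ (ball 0 R₁) (ball (χ 0) (sq * ‖u‖ + ε * R₁ / ‖w‖)) := by
        intro w' hw'
        rw [hχ0, mem_ball, dist_zero_right]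
        exact lt_of_le_of_lt (hχbound w' hw') (lt_add_of_pos_right _ hε')
      have hS := Complex.dist_le_div_mul_dist_of_mapsTo_ball hχd (hmapsχ.mono_right ball_subset_closedBall) hw
      rw [hχ0, dist_zero_right, dist_zero_right] at hS
      have hwne : ‖w‖ ≠ 0 := ne_of_gt hwpos
      have hR₁ne : R₁ ≠ 0 := ne_of_gt hR₁pos
      calc ‖χ w‖ ≤ (sq * ‖u‖ + ε * R₁ / ‖w‖) / R₁ * ‖w‖ := hS
        _ = sq * ‖u‖ / R₁ * ‖w‖ + ε * (‖w‖⁻¹ * ‖w‖) := by field_simp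
        _ = sq * ‖u‖ / R₁ * ‖w‖ + ε := by rw [inv_mul_cancel₀ hwne, mul_one]
    -- integrate along [0,1]
    have htmem : ∀ t : ℝ, t ∈ Set.Icc (0:ℝ) 1 → (t:ℂ) ∈ ball (0:ℂ) R₁ := by
      intro t ht
      rw [mem_ball, dist_zero_right]
      have : ‖(t:ℂ)‖ = |t| := by
        rw [Complex.norm_real, Real.norm_eq_abs]
      rw [this]
      calc |t| ≤ 1 := abs_le.mpr ⟨by linarith [ht.1], ht.2⟩
        _ < R₁ := hR₁
    have hψ : ∀ t ∈ Set.Icc (0:ℝ) 1,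
        HasDerivAt (fun s : ℝ => φ s - φ 0) (χ t) t := by
      intro t ht
      have h1 : HasDerivAt φ (χ (t:ℂ)) (t:ℂ) := by
        rw [hχeq _ (htmem t ht)]
        exact hφdAt _ (htmem t ht)
      have h2 : HasDerivAt (fun s : ℝ => φ s) ((1:ℂ) • χ (t:ℂ)) t :=
        HasDerivAt.scomp t h1 Complex.ofRealCLM.hasDerivAt
      simpa using h2.sub_const (φ 0)
    have hbound2 : ∀ t ∈ Set.Ico (0:ℝ) 1, ‖χ t‖ ≤ sq * ‖u‖ ^ 2 / ρ₀ * t := by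
      intro t ht
      have h1 := hχS (t:ℂ) (htmem t ⟨ht.1, ht.2.le⟩)
      have habs : ‖(t:ℂ)‖ = t := by
        rw [Complex.norm_real, Real.norm_eq_abs, abs_of_nonneg ht.1]
      rw [habs] at h1
      have hcoef : sq * ‖u‖ / R₁ = sq * ‖u‖ ^ 2 / ρ₀ := by
        have h₁ : ‖u‖ ≠ 0 := ne_of_gt hu
        have h₂ : ρ₀ ≠ 0 := ne_of_gt hρ₀
        rw [hR₁def]
        field_simp
      rw [hcoef] at h1
      exact h1
    have hB : ∀ t : ℝ, HasDerivAt (fun t : ℝ => sq * ‖u‖ ^ 2 / (2 * ρ₀) * t ^ 2)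
        (sq * ‖u‖ ^ 2 / ρ₀ * t) t := by
      intro t
      have h1 := (hasDerivAt_pow 2 t).const_mul (sq * ‖u‖ ^ 2 / (2 * ρ₀))
      refine h1.congr_deriv ?_
      rw [show (2:ℕ) - 1 = 1 from rfl, pow_one]
      push_cast
      ring
    have hcont : ContinuousOn (fun s : ℝ => φ s - φ 0) (Set.Icc 0 1) :=
      fun t ht => ((hψ t ht).continuousAt).continuousWithinAt
    have hfin := image_norm_le_of_norm_deriv_right_le_deriv_boundary hcont
      (fun t ht => ((hψ t ⟨ht.1, ht.2.le⟩).hasDerivWithinAt)) (by simp) hB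
      (fun t ht => hbound2 t ht) (Set.right_mem_Icc.mpr zero_le_one)
    have hφ1 : φ ((1:ℝ):ℂ) = g z := by
      have hzu : a + u = z := by rw [hudef]; abel
      rw [hφdef]
      show g (a + ((1:ℝ):ℂ) • u) = g z
      rw [show ((1:ℝ):ℂ) = (1:ℂ) by norm_num, one_smul, hzu]
    have hφ0 : φ 0 = g a := by
      rw [hφdef]
      simp
    rw [hφ1, hφ0] at hfin
    calc ‖g z - g a‖ ≤ sq * ‖u‖ ^ 2 / (2 * ρ₀) * 1 ^ 2 := hfin
      _ = sq * ‖z - a‖ ^ 2 / (2 * ρ₀) := by rw [hudef]; ring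
  -- covering
  intro w hw
  rw [mem_ball] at hw
  rcases eq_or_ne w (f a) with rfl | hwne
  · exact ⟨a, mem_ball_self hρ₀, rfl⟩
  set r := dist w (f a) with hrdef
  have hr : 0 < r := dist_pos.mpr hwne
  have hwr : r < 2⁻¹ * sq * ρ₀ := hw
  -- the inverse of A'
  have hA'inj : Function.Injective (A' : EuclideanSpace ℂ (Fin n) →ₗ[ℂ] EuclideanSpace ℂ (Fin n)) := by
    intro v₁ v₂ hv
    have h1 := hlow (v₁ - v₂)
    have hv' : A' (v₁ - v₂) = 0 := by
      rw [map_sub]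
      rw [show (A' : EuclideanSpace ℂ (Fin n) →ₗ[ℂ] EuclideanSpace ℂ (Fin n)) v₁ = A' v₁ from rfl,
        show (A' : EuclideanSpace ℂ (Fin n) →ₗ[ℂ] EuclideanSpace ℂ (Fin n)) v₂ = A' v₂ from rfl] at hv
      rw [hv, sub_self]
    rw [hv', norm_zero] at h1
    have h2 : ‖v₁ - v₂‖ ≤ 0 := by nlinarith [norm_nonneg (v₁ - v₂)]
    have h3 : v₁ - v₂ = 0 := by
      rw [← norm_le_zero_iff]
      exact h2
    rw [sub_eq_zero] at h3
    exact h3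
  have hA'surj := LinearMap.injective_iff_surjective.mp hA'inj
  set e : EuclideanSpace ℂ (Fin n) ≃L[ℂ] EuclideanSpace ℂ (Fin n) :=
    (LinearEquiv.ofBijective (A' : EuclideanSpace ℂ (Fin n) →ₗ[ℂ] EuclideanSpace ℂ (Fin n))
      ⟨hA'inj, hA'surj⟩).toContinuousLinearEquiv with hedef
  have he : ∀ v, e v = A' v := fun v => rfl
  have hesymmA : ∀ v, e.symm (A' v) = v := by
    intro v
    rw [← he]
    exact e.symm_apply_apply v
  have hesymm : ∀ v, ‖e.symm v‖ ≤ sq⁻¹ * ‖v‖ := by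
    intro v
    have h1 := hlow (e.symm v)
    rw [← he, e.apply_symm_apply] at h1
    rw [inv_mul_eq_div, le_div_iff₀ hsq]
    linarith
  -- choice of the radius
  set δ := Real.sqrt (1 - 2 * r / (sq * ρ₀)) with hδdef
  have hx1 : 0 < 2 * r / (sq * ρ₀) := by positivity
  have hx2 : 2 * r / (sq * ρ₀) < 1 := by
    rw [div_lt_one (by positivity)]
    nlinarith
  have hδpos : 0 < δ := Real.sqrt_pos.mpr (by linarith)
  have hδlt : δ < 1 := by
    have h1 := Real.sqrt_lt_sqrt (by linarith) (show 1 - 2 * r / (sq * ρ₀) < 1 by linarith)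
    simpa using h1
  have hδsq : δ ^ 2 = 1 - 2 * r / (sq * ρ₀) := Real.sq_sqrt (by linarith)
  set ρ := (1 - δ) * ρ₀ with hρdef
  have hρpos : 0 < ρ := by nlinarith
  have hρlt : ρ < ρ₀ := by nlinarith
  have harith : r / sq + ρ ^ 2 / (2 * ρ₀) = ρ := by
    have h1 : r = (1 - δ ^ 2) * (sq * ρ₀) / 2 := by
      have := hδsq
      field_simp at this ⊢
      nlinarith [this]
    rw [h1, hρdef]
    field_simp
    ring
  -- the iteration map
  set Φ : EuclideanSpace ℂ (Fin n) → EuclideanSpace ℂ (Fin n) :=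
    fun z => z + e.symm (w - f z) with hΦdef
  have hgdiff : ∀ x' y', g x' - g y' = (f x' - f y') - A' (x' - y') := by
    intro x' y'
    rw [hgdef]
    simp only
    rw [map_sub]
    abel
  have hΦmaps : ∀ z ∈ closedBall a ρ, Φ z ∈ closedBall a ρ := by
    intro z hz
    have hz' : z ∈ ball a ρ₀ := (closedBall_subset_ball hρlt) hz
    have h2 := hM2 z hz'
    have hza : ‖z - a‖ ≤ ρ := by rwa [mem_closedBall, dist_eq_norm] at hz
    have hkey : Φ z - a = e.symm (w - f a) - e.symm (f z - f a - A' (z - a)) := by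
      rw [hΦdef]
      simp only
      have h3 : e.symm (w - f z) = e.symm (w - f a) - e.symm (f z - f a) := by
        rw [← map_sub]
        congr 1
        abel
      have h4 : e.symm (f z - f a - A' (z - a)) = e.symm (f z - f a) - (z - a) := by
        rw [map_sub, hesymmA]
      rw [h3, h4]
      abel
    rw [mem_closedBall, dist_eq_norm, hkey]
    have h5 : ‖e.symm (w - f a)‖ ≤ sq⁻¹ * r := by
      have := hesymm (w - f a)
      rwa [show ‖w - f a‖ = r by rw [hrdef, dist_eq_norm]] at this
    have h6 : ‖e.symm (f z - f a - A' (z - a))‖ ≤ sq⁻¹ * (sq * ‖z - a‖ ^ 2 / (2 * ρ₀)) := by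
      refine (hesymm _).trans ?_
      have h7 : f z - f a - A' (z - a) = g z - g a := (hgdiff z a).symm
      rw [h7]
      exact mul_le_mul_of_nonneg_left h2 (by positivity)
    calc ‖e.symm (w - f a) - e.symm (f z - f a - A' (z - a))‖
        ≤ ‖e.symm (w - f a)‖ + ‖e.symm (f z - f a - A' (z - a))‖ := norm_sub_le _ _
      _ ≤ sq⁻¹ * r + sq⁻¹ * (sq * ‖z - a‖ ^ 2 / (2 * ρ₀)) := add_le_add h5 h6
      _ = r / sq + ‖z - a‖ ^ 2 / (2 * ρ₀) := by
          field_simp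
      _ ≤ r / sq + ρ ^ 2 / (2 * ρ₀) := by gcongr
      _ = ρ := harith
  have hΦcontr : ∀ x' ∈ closedBall a ρ, ∀ y' ∈ closedBall a ρ,
      ‖Φ x' - Φ y'‖ ≤ ρ / ρ₀ * ‖x' - y'‖ := by
    intro x' hx' y' hy'
    have h1 := hM1 ρ hρpos hρlt x' hx' y' hy'
    have h2 : e.symm (g x' - g y') = e.symm (f x' - f y') - (x' - y') := by
      rw [hgdiff x' y', map_sub, hesymmA]
    have hkey : Φ x' - Φ y' = -(e.symm (g x' - g y')) := by
      rw [hΦdef]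
      simp only
      have h5 : e.symm (w - f x') - e.symm (w - f y') = -(e.symm (f x' - f y')) := by
        rw [← map_sub, ← map_neg]
        congr 1
        abel
      calc x' + e.symm (w - f x') - (y' + e.symm (w - f y'))
          = (x' - y') + (e.symm (w - f x') - e.symm (w - f y')) := by abel
        _ = (x' - y') - e.symm (f x' - f y') := by rw [h5]; abel
        _ = -(e.symm (f x' - f y') - (x' - y')) := by abel
        _ = -(e.symm (g x' - g y')) := by rw [h2]
    rw [hkey, norm_neg]
    calc ‖e.symm (g x' - g y')‖ ≤ sq⁻¹ * ‖g x' - g y'‖ := hesymm _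
      _ ≤ sq⁻¹ * (sq * ρ / ρ₀ * ‖x' - y'‖) := by gcongr
      _ = (sq⁻¹ * sq) * (ρ / ρ₀ * ‖x' - y'‖) := by ring
      _ = ρ / ρ₀ * ‖x' - y'‖ := by rw [inv_mul_cancel₀ (ne_of_gt hsq), one_mul]
  -- Banach fixed point
  haveI hne : Nonempty (closedBall a ρ) := ⟨⟨a, mem_closedBall_self hρpos.le⟩⟩
  haveI hcs : CompleteSpace (closedBall a ρ) :=
    (isClosed_closedBall (x := a) (ε := ρ)).completeSpace_coe
  set Φ' : closedBall a ρ → closedBall a ρ := fun z => ⟨Φ z, hΦmaps z z.2⟩ with hΦ'def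
  have hk1 : ρ / ρ₀ < 1 := by
    rw [div_lt_one hρ₀]
    exact hρlt
  set k : NNReal := ⟨ρ / ρ₀, by positivity⟩ with hkdef
  have hcontr : ContractingWith k Φ' := by
    constructor
    · exact_mod_cast hk1
    · apply LipschitzWith.of_dist_le_mul
      intro x' y'
      have hd : dist (Φ' x') (Φ' y') = ‖Φ (x' : EuclideanSpace ℂ (Fin n)) - Φ (y' : EuclideanSpace ℂ (Fin n))‖ := by
        rw [Subtype.dist_eq, dist_eq_norm]
      have hd2 : dist x' y' = ‖(x' : EuclideanSpace ℂ (Fin n)) - (y' : EuclideanSpace ℂ (Fin n))‖ := by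
        rw [Subtype.dist_eq, dist_eq_norm]
      rw [hd, hd2]
      exact hΦcontr x' x'.2 y' y'.2
  set z₁ := ContractingWith.fixedPoint Φ' hcontr with hz₁def
  have hfix : Φ' z₁ = z₁ := hcontr.fixedPoint_isFixedPt
  have hfix2 : Φ (z₁ : EuclideanSpace ℂ (Fin n)) = (z₁ : EuclideanSpace ℂ (Fin n)) :=
    congrArg Subtype.val hfix
  have h0 : e.symm (w - f z₁) = 0 := by
    have := hfix2
    rw [hΦdef] at this
    simp only at this
    exact add_eq_left.mp this
  have hw0 : w - f z₁ = 0 := by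
    have h1 := congrArg e h0
    rwa [e.apply_symm_apply, map_zero] at h1
  exact ⟨z₁, (closedBall_subset_ball hρlt) z₁.2, (sub_eq_zero.mp hw0).symm⟩
end

section
/- Let f be a holomorphic mapping defined on an open neighborhood of a point t ∈ ℂⁿ into ℂⁿ with det f′(t) ≠ 0, and let λ_f > 0 be the positive square root of the smallest eigenvalue of the Hermitian matrix A*A, where A = f′(t). Let Ω_f = {z in the domain of f : |f′(z) − f′(t)| < λ_f}, where |·| denotes the operator norm. Then f is univalent (injective) on every open convex subset of Ω_f containing t. -/
open Metric

section Aux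

open Matrix
open scoped InnerProductSpace

lemma minEigAhA_nonneg {n : ℕ} (M : Matrix (Fin n) (Fin n) ℂ) : 0 ≤ minEigAhA M := by
  unfold minEigAhA
  rcases isEmpty_or_nonempty (Fin n) with h | h
  · simp
  · open ComplexOrder in
    exact le_ciInf fun i => (Matrix.posSemidef_conjTranspose_mul_self M).eigenvalues_nonneg i

lemma quad_minEigAhA {n : ℕ} (M : Matrix (Fin n) (Fin n) ℂ) (v : EuclideanSpace ℂ (Fin n)) :
    minEigAhA M * ‖v‖ ^ 2 ≤ ‖Matrix.toEuclideanLin M v‖ ^ 2 := by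
  classical
  have hN : (Mᴴ * M).IsHermitian := Matrix.isHermitian_conjTranspose_mul_self M
  set b := hN.eigenvectorBasis with hb
  set μ := hN.eigenvalues with hμ
  set c : EuclideanSpace ℂ (Fin n) := b.repr v with hc
  have hmul : Matrix.toEuclideanLin (Mᴴ * M) v
      = Matrix.toEuclideanLin Mᴴ (Matrix.toEuclideanLin M v) := by
    simp [Matrix.toEuclideanLin_apply, ← Matrix.mulVec_mulVec]
  have heig : ∀ i, Matrix.toEuclideanLin (Mᴴ * M) (b i) = (μ i : ℂ) • b i := by
    intro i
    refine PiLp.ext fun j => ?_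
    have h1 := congrFun (hN.mulVec_eigenvectorBasis i) j
    simpa [Matrix.toEuclideanLin_apply, Complex.real_smul] using h1
  have hrepr : ∀ i, b.repr (Matrix.toEuclideanLin (Mᴴ * M) v) i = (μ i : ℂ) * c i := by
    intro i
    rw [b.repr_apply_apply, hc, b.repr_apply_apply]
    calc ⟪(b i : EuclideanSpace ℂ (Fin n)), Matrix.toEuclideanLin (Mᴴ * M) v⟫_ℂ
        = ⟪LinearMap.adjoint (Matrix.toEuclideanLin (Mᴴ * M)) (b i), v⟫_ℂ := by
          rw [LinearMap.adjoint_inner_left]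
      _ = ⟪Matrix.toEuclideanLin (Mᴴ * M)ᴴ (b i), v⟫_ℂ := by
          rw [Matrix.toEuclideanLin_conjTranspose_eq_adjoint]
      _ = ⟪Matrix.toEuclideanLin (Mᴴ * M) (b i), v⟫_ℂ := by rw [hN.eq]
      _ = ⟪((μ i : ℂ) • b i : EuclideanSpace ℂ (Fin n)), v⟫_ℂ := by rw [heig i]
      _ = (μ i : ℂ) * ⟪(b i : EuclideanSpace ℂ (Fin n)), v⟫_ℂ := by
          rw [inner_smul_left]; simp [Complex.conj_ofReal]
  have hnormMv : ‖Matrix.toEuclideanLin M v‖ ^ 2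
      = RCLike.re ⟪Matrix.toEuclideanLin (Mᴴ * M) v, v⟫_ℂ := by
    rw [hmul, Matrix.toEuclideanLin_conjTranspose_eq_adjoint, LinearMap.adjoint_inner_left]
    exact (inner_self_eq_norm_sq _).symm
  have hsum : RCLike.re ⟪Matrix.toEuclideanLin (Mᴴ * M) v, v⟫_ℂ = ∑ i, μ i * ‖c i‖ ^ 2 := by
    rw [← b.repr.inner_map_map (Matrix.toEuclideanLin (Mᴴ * M) v) v, PiLp.inner_apply]
    rw [map_sum]
    refine Finset.sum_congr rfl fun i _ => ?_
    rw [RCLike.inner_apply']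
    show ((starRingEnd ℂ) (b.repr ((Matrix.toEuclideanLin (Mᴴ * M)) v) i) * b.repr v i).re
      = μ i * ‖c i‖ ^ 2
    rw [hrepr i, ← hc, _root_.map_mul, mul_assoc, RCLike.conj_mul, Complex.conj_ofReal]
    norm_num [Complex.ofReal_mul]
    left
    rw [← Complex.ofReal_pow, Complex.ofReal_re]
  have hnormv : ‖v‖ ^ 2 = ∑ i, ‖c i‖ ^ 2 := by
    rw [← b.repr.norm_map v, EuclideanSpace.norm_eq, Real.sq_sqrt (by positivity)]
  have hmin : ∀ i, minEigAhA M ≤ μ i := fun i => ciInf_le (f := μ) (Finite.bddBelow_range _) i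
  calc minEigAhA M * ‖v‖ ^ 2 = ∑ i, minEigAhA M * ‖c i‖ ^ 2 := by
        rw [hnormv, Finset.mul_sum]
    _ ≤ ∑ i, μ i * ‖c i‖ ^ 2 :=
        Finset.sum_le_sum fun i _ => mul_le_mul_of_nonneg_right (hmin i) (by positivity)
    _ = ‖Matrix.toEuclideanLin M v‖ ^ 2 := by rw [← hsum, ← hnormMv]

lemma sqrt_minEigAhA_mul_norm_le {n : ℕ} (M : Matrix (Fin n) (Fin n) ℂ)
    (v : EuclideanSpace ℂ (Fin n)) :
    Real.sqrt (minEigAhA M) * ‖v‖ ≤ ‖Matrix.toEuclideanLin M v‖ := by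
  have h0 := minEigAhA_nonneg M
  calc Real.sqrt (minEigAhA M) * ‖v‖ = Real.sqrt (minEigAhA M * ‖v‖ ^ 2) := by
        rw [Real.sqrt_mul h0, Real.sqrt_sq (norm_nonneg v)]
    _ ≤ Real.sqrt (‖Matrix.toEuclideanLin M v‖ ^ 2) := Real.sqrt_le_sqrt (quad_minEigAhA M v)
    _ = ‖Matrix.toEuclideanLin M v‖ := Real.sqrt_sq (norm_nonneg _)

lemma clm_eq_toEuclideanLin {n : ℕ}
    (A : EuclideanSpace ℂ (Fin n) →L[ℂ] EuclideanSpace ℂ (Fin n))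
    (v : EuclideanSpace ℂ (Fin n)) :
    A v = Matrix.toEuclideanLin (fun i j => A (EuclideanSpace.single j 1) i) v := by
  conv_lhs => rw [← (EuclideanSpace.basisFun (Fin n) ℂ).sum_repr v]
  rw [map_sum]
  refine PiLp.ext fun i => ?_
  rw [WithLp.ofLp_sum, Finset.sum_apply i Finset.univ _]
  simp [Matrix.toEuclideanLin_apply, Matrix.mulVec, dotProduct,
    PiLp.smul_apply, EuclideanSpace.basisFun_repr, EuclideanSpace.basisFun_apply, mul_comm]
  exact (Finset.sum_congr rfl fun c _ => mul_comm _ _).trans rfl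

end Aux

/-- **Hahn's lemma, part (a)**: univalence on open convex subsets of `Ω_f`. -/
theorem hahn_univalence_on_convex_subsets (n : ℕ)
    (V : Set (EuclideanSpace ℂ (Fin n))) (hV : IsOpen V)
    (f : EuclideanSpace ℂ (Fin n) → EuclideanSpace ℂ (Fin n))
    (hf : DifferentiableOn ℂ f V)
    (t : EuclideanSpace ℂ (Fin n)) (ht : t ∈ V)
    (hdet : (jacobian f t).det ≠ 0)
    (U : Set (EuclideanSpace ℂ (Fin n))) (hU : IsOpen U) (hUconv : Convex ℝ U)
    (htU : t ∈ U)
    (hUΩ : U ⊆ {z ∈ V |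
      ‖fderiv ℂ f z - fderiv ℂ f t‖ < Real.sqrt (minEigAhA (jacobian f t))}) :
    Set.InjOn f U := by
  classical
  set lam := Real.sqrt (minEigAhA (jacobian f t)) with hlamdef
  set A := fderiv ℂ f t with hAdef
  have hjac : jacobian f t = fun i j => A (EuclideanSpace.single j 1) i := rfl
  have hkey : ∀ v : EuclideanSpace ℂ (Fin n), lam * ‖v‖ ≤ ‖A v‖ := by
    intro v
    rw [clm_eq_toEuclideanLin A v, hlamdef, hjac]
    exact sqrt_minEigAhA_mul_norm_le _ v
  intro x hx y hy hxy
  by_contra hne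
  set w := y - x with hwdef
  have hw0 : w ≠ 0 := sub_ne_zero.mpr (Ne.symm hne)
  have hwpos : (0 : ℝ) < ‖w‖ := norm_pos_iff.mpr hw0
  set γ : ℂ → EuclideanSpace ℂ (Fin n) := fun s => x + s • w with hγdef
  have hγcont : Continuous γ := continuous_const.add (continuous_id.smul continuous_const)
  set D : Set ℂ := γ ⁻¹' U with hDdef
  have hDopen : IsOpen D := hU.preimage hγcont
  have hseg : segment ℝ (0 : ℂ) 1 ⊆ D := by
    rintro s ⟨p, q, hp, hq, hpq, rfl⟩
    show γ (p • 0 + q • 1) ∈ U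
    have hpe : p = 1 - q := by linarith
    subst hpe
    have hval : γ ((1 - q) • (0 : ℂ) + q • 1) = (1 - q) • x + q • y := by
      show x + ((1 - q) • (0 : ℂ) + q • 1) • w = (1 - q) • x + q • y
      have h1 : ((1 - q) • (0 : ℂ) + q • 1) = ((q : ℝ) : ℂ) := by
        simp [Complex.real_smul]
      rw [h1, Complex.coe_smul, hwdef]
      module
    rw [hval]
    exact hUconv hx hy (by linarith) hq (by ring)
  have hDV : ∀ s ∈ D, γ s ∈ V := fun s hs => (hUΩ hs).1
  set g : ℂ → EuclideanSpace ℂ (Fin n) := f ∘ γ with hgdef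
  have hgdiff : ∀ s ∈ D, HasDerivAt g (fderiv ℂ f (γ s) w) s := by
    intro s hs
    have hfd : DifferentiableAt ℂ f (γ s) := hf.differentiableAt (hV.mem_nhds (hDV s hs))
    have hγd : HasDerivAt γ w s := by
      simpa [hγdef] using ((hasDerivAt_id s).smul_const w).const_add x
    exact hfd.hasFDerivAt.comp_hasDerivAt s hγd
  have hgdo : DifferentiableOn ℂ g D :=
    fun s hs => ((hgdiff s hs).differentiableAt).differentiableWithinAt
  have hgan : AnalyticOnNhd ℂ g D := hgdo.analyticOnNhd hDopen
  set φ : ℂ →L[ℂ] EuclideanSpace ℂ (Fin n) :=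
    ContinuousLinearMap.smulRight (1 : ℂ →L[ℂ] ℂ) (A w) with hφdef
  have hcont : ContinuousOn (fun s => ‖fderiv ℂ g s - φ‖) D :=
    ((hgan.fderiv.continuousOn).sub continuousOn_const).norm
  have hfd_eq : ∀ s ∈ D, fderiv ℂ g s
      = ContinuousLinearMap.smulRight (1 : ℂ →L[ℂ] ℂ) (fderiv ℂ f (γ s) w) :=
    fun s hs => (hgdiff s hs).hasFDerivAt.fderiv
  have hbound : ∀ s ∈ segment ℝ (0 : ℂ) 1, ‖fderiv ℂ g s - φ‖ < lam * ‖w‖ := by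
    intro s hs
    rw [hfd_eq s (hseg hs)]
    have hdiff : ContinuousLinearMap.smulRight (1 : ℂ →L[ℂ] ℂ) (fderiv ℂ f (γ s) w) - φ
        = ContinuousLinearMap.smulRight (1 : ℂ →L[ℂ] ℂ) ((fderiv ℂ f (γ s) - A) w) := by
      refine ContinuousLinearMap.ext fun c => ?_
      simp only [hφdef, ContinuousLinearMap.sub_apply, ContinuousLinearMap.smulRight_apply,
        ContinuousLinearMap.one_apply, smul_sub]
    rw [hdiff, ContinuousLinearMap.norm_smulRight_apply]
    have hone : ‖(1 : ℂ →L[ℂ] ℂ)‖ = 1 := norm_one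
    rw [hone, one_mul]
    calc ‖(fderiv ℂ f (γ s) - A) w‖ ≤ ‖fderiv ℂ f (γ s) - A‖ * ‖w‖ :=
          ContinuousLinearMap.le_opNorm _ w
      _ < lam * ‖w‖ := mul_lt_mul_of_pos_right (hUΩ (hseg hs)).2 hwpos
  have hsegcomp : IsCompact (segment ℝ (0 : ℂ) 1) := by
    rw [segment_eq_image]
    exact isCompact_Icc.image (by fun_prop)
  obtain ⟨s₀, hs₀, hmax⟩ := hsegcomp.exists_isMaxOn ⟨0, left_mem_segment ℝ (0 : ℂ) 1⟩
    (hcont.mono hseg)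
  have hCl : ‖fderiv ℂ g s₀ - φ‖ < lam * ‖w‖ := hbound s₀ hs₀
  have hmvt := Convex.norm_image_sub_le_of_norm_hasFDerivWithin_le'
    (f := g) (f' := fun s => fderiv ℂ g s) (φ := φ) (C := ‖fderiv ℂ g s₀ - φ‖)
    (s := segment ℝ (0 : ℂ) 1) (x := (0 : ℂ)) (y := (1 : ℂ))
    (fun s hs => ((hgdiff s (hseg hs)).differentiableAt.hasFDerivAt).hasFDerivWithinAt)
    (fun s hs => hmax hs)
    (convex_segment _ _) (left_mem_segment ℝ (0 : ℂ) 1) (right_mem_segment ℝ (0 : ℂ) 1)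
  have h1 : g 1 = f y := by
    show f (x + (1 : ℂ) • (y - x)) = f y
    rw [show x + (1 : ℂ) • (y - x) = y from by rw [one_smul]; abel]
  have h0 : g 0 = f x := by
    show f (x + (0 : ℂ) • w) = f x
    rw [zero_smul, add_zero]
  have hφ1 : φ ((1 : ℂ) - 0) = A w := by
    simp [hφdef]
  have hAwle : ‖A w‖ ≤ ‖fderiv ℂ g s₀ - φ‖ := by
    have := hmvt
    rw [h1, h0, hφ1, ← hxy, sub_self, zero_sub, norm_neg] at this
    simpa using this
  have : ‖A w‖ < lam * ‖w‖ := lt_of_le_of_lt hAwle hCl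
  exact absurd (hkey w) (not_le.mpr this)
end

section
/- Let f : B² → ℂ² be defined by f(z₁, z₂) = (z₁ + z₂, (z₁ − 1/2)² + (z₂ − 1/3)²), where B² is the open unit ball of ℂ². Then f is holomorphic on B², f is a Bochner (1,20)-mapping, i.e. ‖f′(z)‖² ≤ |det f′(z)| + 20 for all z ∈ B², but for every constant K ≥ 1 the mapping f is not a Bochner K-mapping, i.e. there exists z ∈ B² with ‖f′(z)‖ > K·|det f′(z)|^{1/2}. -/
open Metric

noncomputable def myD (z : EuclideanSpace ℂ (Fin 2)) :
    EuclideanSpace ℂ (Fin 2) →L[ℂ] EuclideanSpace ℂ (Fin 2) :=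
  ((PiLp.continuousLinearEquiv 2 ℂ (fun _ : Fin 2 => ℂ)).symm :
      (Fin 2 → ℂ) →L[ℂ] EuclideanSpace ℂ (Fin 2)).comp
    (ContinuousLinearMap.pi
      ![(EuclideanSpace.proj 0 : EuclideanSpace ℂ (Fin 2) →L[ℂ] ℂ) + EuclideanSpace.proj 1,
        (2 * (z 0 - 1/2)) • (EuclideanSpace.proj 0 : EuclideanSpace ℂ (Fin 2) →L[ℂ] ℂ)
          + (2 * (z 1 - 1/3)) • EuclideanSpace.proj 1])

theorem myHasFDeriv (f : EuclideanSpace ℂ (Fin 2) → EuclideanSpace ℂ (Fin 2))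
    (hf : ∀ z : EuclideanSpace ℂ (Fin 2),
      f z 0 = z 0 + z 1 ∧ f z 1 = (z 0 - 1 / 2) ^ 2 + (z 1 - 1 / 3) ^ 2)
    (z : EuclideanSpace ℂ (Fin 2)) : HasFDerivAt f (myD z) z := by
  have h0 : HasFDerivAt (fun w : EuclideanSpace ℂ (Fin 2) => w 0 + w 1)
      ((EuclideanSpace.proj 0 : EuclideanSpace ℂ (Fin 2) →L[ℂ] ℂ) + EuclideanSpace.proj 1) z :=
    ((EuclideanSpace.proj (0 : Fin 2) : EuclideanSpace ℂ (Fin 2) →L[ℂ] ℂ).hasFDerivAt).add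
      ((EuclideanSpace.proj (1 : Fin 2) : EuclideanSpace ℂ (Fin 2) →L[ℂ] ℂ).hasFDerivAt)
  have ha : HasFDerivAt (fun w : EuclideanSpace ℂ (Fin 2) => w 0 - 1/2)
      (EuclideanSpace.proj 0 : EuclideanSpace ℂ (Fin 2) →L[ℂ] ℂ) z :=
    ((EuclideanSpace.proj (0 : Fin 2) : EuclideanSpace ℂ (Fin 2) →L[ℂ] ℂ).hasFDerivAt).sub_const _
  have hb : HasFDerivAt (fun w : EuclideanSpace ℂ (Fin 2) => w 1 - 1/3)
      (EuclideanSpace.proj 1 : EuclideanSpace ℂ (Fin 2) →L[ℂ] ℂ) z :=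
    ((EuclideanSpace.proj (1 : Fin 2) : EuclideanSpace ℂ (Fin 2) →L[ℂ] ℂ).hasFDerivAt).sub_const _
  have h1 : HasFDerivAt (fun w : EuclideanSpace ℂ (Fin 2) =>
      (w 0 - 1/2)^2 + (w 1 - 1/3)^2)
      ((2 * (z 0 - 1/2)) • (EuclideanSpace.proj 0 : EuclideanSpace ℂ (Fin 2) →L[ℂ] ℂ)
        + (2 * (z 1 - 1/3)) • EuclideanSpace.proj 1) z := by
    have hsum := (ha.mul ha).add (hb.mul hb)
    have heq1 : (fun x : EuclideanSpace ℂ (Fin 2) =>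
        (x 0 - 1/2)*(x 0 - 1/2) + (x 1 - 1/3)*(x 1 - 1/3)) =
        fun w : EuclideanSpace ℂ (Fin 2) => (w 0 - 1/2)^2 + (w 1 - 1/3)^2 := by
      funext w; ring
    have heq2 : (z 0 - 1/2) • (EuclideanSpace.proj 0 : EuclideanSpace ℂ (Fin 2) →L[ℂ] ℂ)
        + (z 0 - 1/2) • (EuclideanSpace.proj 0 : EuclideanSpace ℂ (Fin 2) →L[ℂ] ℂ)
        + ((z 1 - 1/3) • (EuclideanSpace.proj 1 : EuclideanSpace ℂ (Fin 2) →L[ℂ] ℂ)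
          + (z 1 - 1/3) • (EuclideanSpace.proj 1 : EuclideanSpace ℂ (Fin 2) →L[ℂ] ℂ)) =
        (2 * (z 0 - 1/2)) • (EuclideanSpace.proj 0 : EuclideanSpace ℂ (Fin 2) →L[ℂ] ℂ)
          + (2 * (z 1 - 1/3)) • EuclideanSpace.proj 1 := by
      module
    rw [← heq1, ← heq2]
    exact hsum
  have hpi : HasFDerivAt (fun w : EuclideanSpace ℂ (Fin 2) => (fun i : Fin 2 =>
      ![w 0 + w 1, (w 0 - 1/2)^2 + (w 1 - 1/3)^2] i))
      (ContinuousLinearMap.pi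
        ![(EuclideanSpace.proj 0 : EuclideanSpace ℂ (Fin 2) →L[ℂ] ℂ) + EuclideanSpace.proj 1,
          (2 * (z 0 - 1/2)) • (EuclideanSpace.proj 0 : EuclideanSpace ℂ (Fin 2) →L[ℂ] ℂ)
            + (2 * (z 1 - 1/3)) • EuclideanSpace.proj 1]) z := by
    apply hasFDerivAt_pi.2
    intro i
    fin_cases i
    · exact h0
    · exact h1
  have hcomp := (((PiLp.continuousLinearEquiv 2 ℂ (fun _ : Fin 2 => ℂ)).symm :
      (Fin 2 → ℂ) →L[ℂ] EuclideanSpace ℂ (Fin 2)).hasFDerivAt).comp z hpi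
  have heqf : f = ⇑(((PiLp.continuousLinearEquiv 2 ℂ (fun _ : Fin 2 => ℂ)).symm :
      (Fin 2 → ℂ) →L[ℂ] EuclideanSpace ℂ (Fin 2))) ∘ (fun w : EuclideanSpace ℂ (Fin 2) =>
      (fun i : Fin 2 => ![w 0 + w 1, (w 0 - 1/2)^2 + (w 1 - 1/3)^2] i)) := by
   funext w
   ext i
   fin_cases i
   · simpa using (hf w).1
   · simpa using (hf w).2
  rw [heqf]
  exact hcomp

theorem jac_eq (f : EuclideanSpace ℂ (Fin 2) → EuclideanSpace ℂ (Fin 2))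
    (hf : ∀ z : EuclideanSpace ℂ (Fin 2),
      f z 0 = z 0 + z 1 ∧ f z 1 = (z 0 - 1 / 2) ^ 2 + (z 1 - 1 / 3) ^ 2)
    (z : EuclideanSpace ℂ (Fin 2)) :
    jacobian f z = Matrix.of ![![1, 1], ![2 * (z 0 - 1/2), 2 * (z 1 - 1/3)]] := by
  have hd := (myHasFDeriv f hf z).fderiv
  funext i j
  simp only [jacobian, hd]
  fin_cases i <;> fin_cases j <;>
    simp [myD, EuclideanSpace.single_apply, PiLp.proj_apply]

/-- The mapping `f(z₁,z₂) = (z₁+z₂, (z₁-1/2)² + (z₂-1/3)²)` is holomorphic on `B²` and a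
Bochner `(1,20)`-mapping, but not a Bochner `K`-mapping for any `K ≥ 1`. -/
theorem example_bochner_one_twenty_not_bochner_K
    (f : EuclideanSpace ℂ (Fin 2) → EuclideanSpace ℂ (Fin 2))
    (hf : ∀ z : EuclideanSpace ℂ (Fin 2),
      f z 0 = z 0 + z 1 ∧ f z 1 = (z 0 - 1 / 2) ^ 2 + (z 1 - 1 / 3) ^ 2) :
    DifferentiableOn ℂ f (ball 0 1) ∧
      (∀ z ∈ ball (0 : EuclideanSpace ℂ (Fin 2)) 1,
        frobNorm (jacobian f z) ^ 2 ≤ ‖(jacobian f z).det‖ + 20) ∧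
      (∀ K : ℝ, 1 ≤ K → ∃ z ∈ ball (0 : EuclideanSpace ℂ (Fin 2)) 1,
        K * ‖(jacobian f z).det‖ ^ ((1 : ℝ) / 2) < frobNorm (jacobian f z)) := by
  have hfrob : ∀ z : EuclideanSpace ℂ (Fin 2), frobNorm (jacobian f z) ^ 2 =
      2 + 4 * ‖z 0 - 1/2‖ ^ 2 + 4 * ‖z 1 - 1/3‖ ^ 2 := by
    intro z
    rw [jac_eq f hf z, frobNorm]
    rw [Real.sq_sqrt (by positivity)]
    simp [Fin.sum_univ_two, Matrix.of_apply, map_mul]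
    ring
  have hdet : ∀ z : EuclideanSpace ℂ (Fin 2),
      (jacobian f z).det = 2 * (z 1 - 1/3) - 2 * (z 0 - 1/2) := by
    intro z
    rw [jac_eq f hf z, Matrix.det_fin_two]
    simp [Matrix.of_apply]
  refine ⟨fun z _ => (myHasFDeriv f hf z).differentiableAt.differentiableWithinAt, ?_, ?_⟩
  · intro z hz
    have hz' : ‖z‖ < 1 := by simpa [mem_ball, dist_zero_right] using hz
    have hnorm : ‖z 0‖ ^ 2 + ‖z 1‖ ^ 2 < 1 := by
      have h1 : ‖z‖ ^ 2 < 1 := by nlinarith [norm_nonneg z]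
      have h2 : ‖z‖ ^ 2 = ‖z 0‖ ^ 2 + ‖z 1‖ ^ 2 := by
        rw [EuclideanSpace.norm_eq, Real.sq_sqrt (by positivity)]
        simp [Fin.sum_univ_two]
      linarith [h2 ▸ h1]
    have ha : ‖z 0 - 1/2‖ ≤ ‖z 0‖ + 1/2 := by
      calc ‖z 0 - 1/2‖ ≤ ‖z 0‖ + ‖(1/2 : ℂ)‖ :=
            by simpa [sub_eq_add_neg] using norm_add_le (z 0) (-(1/2))
        _ = ‖z 0‖ + 1/2 := by norm_num
    have hb : ‖z 1 - 1/3‖ ≤ ‖z 1‖ + 1/3 := by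
      calc ‖z 1 - 1/3‖ ≤ ‖z 1‖ + ‖(1/3 : ℂ)‖ :=
            by simpa [sub_eq_add_neg] using norm_add_le (z 1) (-(1/3))
        _ = ‖z 1‖ + 1/3 := by norm_num
    have h0 : (0:ℝ) ≤ ‖z 0‖ := norm_nonneg _
    have h1 : (0:ℝ) ≤ ‖z 1‖ := norm_nonneg _
    have habs0 : ‖z 0‖ < 1 := by nlinarith
    have habs1 : ‖z 1‖ < 1 := by nlinarith
    have hdetpos : (0:ℝ) ≤ ‖(jacobian f z).det‖ := norm_nonneg _
    rw [hfrob z]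
    nlinarith [norm_nonneg (z 0 - 1/2), norm_nonneg (z 1 - 1/3)]
  · intro K hK
    set w : EuclideanSpace ℂ (Fin 2) :=
      (WithLp.equiv 2 (Fin 2 → ℂ)).symm ![1/12, -(1/12)] with hw
    have hw0 : w 0 = 1/12 := rfl
    have hw1 : w 1 = -(1/12) := rfl
    refine ⟨w, ?_, ?_⟩
    · rw [mem_ball, dist_zero_right, EuclideanSpace.norm_eq]
      rw [show Real.sqrt (∑ i, ‖w i‖^2) = Real.sqrt (‖w 0‖^2 + ‖w 1‖^2) by
        rw [Fin.sum_univ_two]]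
      rw [hw0, hw1]
      rw [show (1:ℝ) = Real.sqrt 1 by simp]
      apply Real.sqrt_lt_sqrt (by positivity)
      norm_num
    · have hd : (jacobian f w).det = 0 := by
        rw [hdet w, hw0, hw1]
        ring
      rw [hd]
      simp only [norm_zero]
      rw [Real.zero_rpow (by norm_num)]
      rw [mul_zero]
      have : frobNorm (jacobian f w) ^ 2 = 2 + 4 * ‖(1:ℂ)/12 - 1/2‖ ^ 2
          + 4 * ‖-(1:ℂ)/12 - 1/3‖ ^ 2 := by
        rw [hfrob w, hw0, hw1]; norm_num
      have hpos : 0 < frobNorm (jacobian f w) ^ 2 := by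
        rw [this]; positivity
      have hnn : 0 ≤ frobNorm (jacobian f w) := Real.sqrt_nonneg _
      nlinarith
end
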